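/- Let C be a commutative ℚ-algebra and λ ∈ C. Let τ_{λ,n}(t) = (1/n!)·∏_{j=0}^{n−1}(t − j·λ), a polynomial of degree n in C[t], and let e_λ(x) = ∑_{m=1}^{∞} λ^{m−1}·x^m/m! ∈ C[[x]]. Then for all n, k ∈ ℕ: ∑_{m=0}^{n} m!·(coefficient of t^m in τ_{λ,n}(t))·(coefficient of x^m in e_λ(x)^k) = δ_{n,k} (equal to 1 if n = k and 0 otherwise). That is, under the classical umbral pairing ⟨t^m/m! | x^n⟩ = δ_{m,n}, the basis {τ_{λ,n}(t)} is dual to {e_λ(x)^n}, so the λ-umbral pairing is compatible with the classical (weight-zero) umbral pairing. -/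

import Mathlib

open Finset PowerSeries

/-- `τ_{λ,n}(t) = (1/n!)·∏_{j=0}^{n−1}(t − j·λ)`, viewed in `C[[t]]`. -/
noncomputable def tauX {C : Type*} [CommRing C] [Algebra ℚ C] (lam : C) (n : ℕ) :
    PowerSeries C :=
  ((n.factorial : ℚ)⁻¹) • ∏ j ∈ Finset.range n, (PowerSeries.X - PowerSeries.C ((j : C) * lam))

/-- `e_λ(x) = ∑_{m=1}^{∞} λ^{m−1}·x^m/m! ∈ C[[x]]`. -/
noncomputable def elam {C : Type*} [CommRing C] [Algebra ℚ C] (lam : C) : PowerSeries C :=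
  PowerSeries.mk fun m => if m = 0 then 0 else ((m.factorial : ℚ)⁻¹) • lam ^ (m - 1)

/-!
The pairing `⟨f | g⟩ = ∑ m! a_m b_m` makes multiplication by `t` adjoint to `d/dx`:
`⟨t f | g⟩ = ⟨f | g'⟩`. Since `λ e_λ = exp(λx) - 1`, we have `e_λ' = 1 + λ e_λ`, hence
`(e_λ^(k+1))' = (k+1) e_λ^k + (k+1) λ e_λ^(k+1)`. Writing `P_n = n! τ_{λ,n}`, the factor
`t - nλ` of `P_(n+1)` therefore gives
`⟨P_(n+1) | e_λ^(k+1)⟩ = (k+1) ⟨P_n | e_λ^k⟩ + (k+1-n) λ ⟨P_n | e_λ^(k+1)⟩`,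
and induction on `n` yields `⟨P_n | e_λ^k⟩ = δ_{n,k} n!`.
-/

open scoped Polynomial PowerSeries Nat

section Pairing

variable {R : Type*} [CommRing R]

noncomputable def umbralPairing : R[X] →ₗ[R] R⟦X⟧ →ₗ[R] R :=
  LinearMap.mk₂ R (fun f g => f.sum fun m a => m ! * a * coeff m g)
    (fun f₁ f₂ g => Polynomial.sum_add_index _ _ _ (by simp) (by intros; ring))
    (fun c f g => by
      rw [Polynomial.sum_smul_index _ _ _ (by simp), Polynomial.sum, Polynomial.sum, smul_eq_mul,
        mul_sum]
      exact sum_congr rfl fun _ _ => by ring)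
    (fun f g₁ g₂ => by simp only [map_add, mul_add, Polynomial.sum_add])
    (fun c f g => by
      simp only [map_smul, smul_eq_mul, Polynomial.sum, mul_sum]
      exact sum_congr rfl fun _ _ => by ring)

theorem umbralPairing_apply (f : R[X]) (g : R⟦X⟧) :
    umbralPairing f g = f.sum fun m a => m ! * a * coeff m g :=
  rfl

theorem umbralPairing_monomial (m : ℕ) (a : R) (g : R⟦X⟧) :
    umbralPairing (Polynomial.monomial m a) g = m ! * a * coeff m g :=
  (umbralPairing_apply _ g).trans (Polynomial.sum_monomial_index _ _ (by simp))

theorem umbralPairing_one (g : R⟦X⟧) : umbralPairing 1 g = constantCoeff g := by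
  simpa using umbralPairing_monomial 0 1 g

theorem umbralPairing_eq_sum_range {f : R[X]} {N : ℕ} (hf : f.natDegree < N) (g : R⟦X⟧) :
    umbralPairing f g = ∑ m ∈ range N, m ! * f.coeff m * coeff m g :=
  (umbralPairing_apply f g).trans (Polynomial.sum_over_range' f (by simp) N hf)

theorem umbralPairing_X_mul (f : R[X]) (g : R⟦X⟧) :
    umbralPairing (Polynomial.X * f) g = umbralPairing f (d⁄dX R g) := by
  induction f using Polynomial.induction_on' with
  | add p q hp hq => simp only [mul_add, map_add, LinearMap.add_apply, hp, hq]
  | monomial m a =>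
    rw [Polynomial.X_mul_monomial, umbralPairing_monomial, umbralPairing_monomial,
      coeff_derivative, Nat.factorial_succ]
    push_cast
    ring

end Pairing

section Elam

variable {R : Type*} [CommRing R] [Algebra ℚ R] (lam : R)

theorem derivative_elam : d⁄dX R (elam lam) = rescale lam (exp R) := by
  ext m
  have key : ((m + 1)! : ℚ)⁻¹ * (m + 1) = 1 / m ! := by
    rw [Nat.factorial_succ]; push_cast; field_simp
  rw [coeff_derivative, coeff_rescale, coeff_exp, elam, coeff_mk, if_neg m.succ_ne_zero,
    Nat.add_sub_cancel, ← key, Algebra.smul_def, map_mul]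
  push_cast
  ring

theorem C_mul_elam : C lam * elam lam = rescale lam (exp R) - 1 := by
  ext m
  rw [coeff_C_mul, elam, coeff_mk, map_sub, coeff_rescale, coeff_exp, coeff_one]
  cases m with
  | zero => simp
  | succ m =>
    rw [if_neg m.succ_ne_zero, if_neg m.succ_ne_zero, sub_zero, Nat.add_sub_cancel,
      Algebra.smul_def, pow_succ, one_div]
    ring

theorem derivative_elam_eq_one_add : d⁄dX R (elam lam) = 1 + C lam * elam lam := by
  rw [derivative_elam, C_mul_elam, add_sub_cancel]

theorem derivative_elam_pow_succ (k : ℕ) :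
    d⁄dX R (elam lam ^ (k + 1)) =
      ((k + 1 : ℕ) : R) • elam lam ^ k + ((k + 1 : ℕ) * lam) • elam lam ^ (k + 1) := by
  rw [Derivation.leibniz_pow, derivative_elam_eq_one_add, smul_eq_C_mul, smul_eq_C_mul, map_mul,
    map_natCast, nsmul_eq_mul, smul_eq_mul, Nat.add_sub_cancel]
  ring

theorem constantCoeff_elam : constantCoeff (elam lam) = 0 := by
  simp [elam, ← coeff_zero_eq_constantCoeff_apply]

end Elam

section Duality

variable {R : Type*} [CommRing R]

noncomputable def weightedDescPochhammer (lam : R) (n : ℕ) : R[X] :=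
  ∏ j ∈ range n, (Polynomial.X - Polynomial.C ((j : R) * lam))

theorem weightedDescPochhammer_succ (lam : R) (n : ℕ) :
    weightedDescPochhammer lam (n + 1) =
      (Polynomial.X - Polynomial.C ((n : R) * lam)) * weightedDescPochhammer lam n :=
  prod_range_succ_comm _ n

theorem natDegree_weightedDescPochhammer_le (lam : R) (n : ℕ) :
    (weightedDescPochhammer lam n).natDegree ≤ n :=
  (Polynomial.natDegree_prod_le _ _).trans <|
    (sum_le_sum fun _ _ => Polynomial.natDegree_X_sub_C_le _).trans (by simp)

variable [Algebra ℚ R] (lam : R)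

theorem umbralPairing_weightedDescPochhammer_elam_pow (n k : ℕ) :
    umbralPairing (weightedDescPochhammer lam n) (elam lam ^ k) =
      if n = k then (n ! : R) else 0 := by
  induction n generalizing k with
  | zero =>
    rw [weightedDescPochhammer, prod_range_zero, umbralPairing_one, map_pow, constantCoeff_elam,
      zero_pow_eq]
    simp [eq_comm]
  | succ n ih =>
    rw [weightedDescPochhammer_succ, sub_mul, ← Polynomial.smul_eq_C_mul, map_sub, map_smul,
      LinearMap.sub_apply, LinearMap.smul_apply, umbralPairing_X_mul, ih, smul_eq_mul]
    cases k with
    | zero =>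
      rw [pow_zero, Derivation.map_one_eq_zero, map_zero]
      split_ifs <;> simp_all
    | succ k =>
      rw [derivative_elam_pow_succ, map_add, map_smul, map_smul, ih, ih, smul_eq_mul, smul_eq_mul]
      split_ifs <;> first | omega | (subst_vars; push_cast [Nat.factorial_succ]; ring)

theorem tauX_eq_smul_weightedDescPochhammer (n : ℕ) :
    tauX lam n = (n ! : ℚ)⁻¹ • (weightedDescPochhammer lam n : R⟦X⟧) := by
  rw [tauX, weightedDescPochhammer, ← Polynomial.coeToPowerSeries.ringHom_apply, map_prod]
  simp only [map_sub, Polynomial.coeToPowerSeries.ringHom_apply, Polynomial.coe_X,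
    Polynomial.coe_C]

end Duality

/-- Under the classical umbral pairing `⟨t^m/m! | x^n⟩ = δ_{m,n}`, the basis `{τ_{λ,n}(t)}`
is dual to `{e_λ(x)^n}`:
`∑_{m=0}^{n} m!·(coeff of t^m in τ_{λ,n})·(coeff of x^m in e_λ^k) = δ_{n,k}`.
Hence the `λ`-umbral pairing is compatible with the classical (weight-zero) pairing. -/
theorem tauX_elam_pow_pairing {C : Type*} [CommRing C] [Algebra ℚ C] (lam : C) (n k : ℕ) :
    ∑ m ∈ Finset.range (n + 1),
      (m.factorial : C) * PowerSeries.coeff m (tauX lam n) *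
        PowerSeries.coeff m ((elam lam) ^ k) = if n = k then 1 else 0 := by
  calc ∑ m ∈ range (n + 1), (m ! : C) * coeff m (tauX lam n) * coeff m (elam lam ^ k)
      = (n ! : ℚ)⁻¹ • umbralPairing (weightedDescPochhammer lam n) (elam lam ^ k) := by
        rw [umbralPairing_eq_sum_range
          (Nat.lt_succ_of_le (natDegree_weightedDescPochhammer_le lam n)), smul_sum]
        refine sum_congr rfl fun m _ => ?_
        rw [tauX_eq_smul_weightedDescPochhammer, LinearMap.map_smul_of_tower, Polynomial.coeff_coe,
          mul_smul_comm, smul_mul_assoc]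
    _ = if n = k then 1 else 0 := by
        rw [umbralPairing_weightedDescPochhammer_elam_pow]
        split_ifs
        · rw [← map_natCast (algebraMap ℚ C), Algebra.smul_def, ← map_mul,
            inv_mul_cancel₀ (by positivity), map_one]
        · exact smul_zero _
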